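/- arXiv:1401.0443 — 4 statements merged into one kernel-verified Lean document; each statement's English description precedes it below -/
import Mathlib

section
/- Let P be a set of n points in the plane in general position. There exists a point p ∈ P such that every quadrant of the form {(x,y) : x ≥ x₀, y ≥ y₀} (a fixed-orientation quadrant) containing more than n/2 points of P also contains p. -/
/-!
Call a point of `P` top-ranked in a coordinate if at most `⌊n/2⌋` points of `P` lie strictly
above it in that coordinate. Everything above a lowest point that is not top-ranked is top-ranked,
so more than `⌊n/2⌋` points are top-ranked in each coordinate, and some point `p` is top-ranked in
both. A quadrant whose corner lies beyond `p` in one coordinate contains only points strictly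
above `p` in that coordinate, hence at most `n/2` points.
-/

open Finset

namespace Finset

variable {α β : Type*} [LinearOrder β]

def topRanked (s : Finset α) (f : α → β) (k : ℕ) : Finset α :=
  {p ∈ s | #{r ∈ s | f p < f r} ≤ k}

theorem topRanked_subset (s : Finset α) (f : α → β) (k : ℕ) : s.topRanked f k ⊆ s :=
  filter_subset _ _

theorem lt_card_topRanked {s : Finset α} (f : α → β) {k : ℕ} (hk : k < #s) :
    k < #(s.topRanked f k) := by
  classical
  rcases (s \ s.topRanked f k).eq_empty_or_nonempty with hall | ⟨q₀, hq₀⟩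
  · rwa [(topRanked_subset s f k).antisymm (sdiff_eq_empty_iff_subset.mp hall)]
  obtain ⟨q, hq, hmax⟩ := exists_max_image (s \ s.topRanked f k) f ⟨q₀, hq₀⟩
  obtain ⟨hqs, hqT⟩ := mem_sdiff.mp hq
  have hmany : k < #{r ∈ s | f q < f r} := by
    simpa [topRanked, hqs] using hqT
  have habove : {r ∈ s | f q < f r} ⊆ s.topRanked f k := by
    intro r hr
    obtain ⟨hrs, hqr⟩ := mem_filter.mp hr
    by_contra hrT
    exact (hmax r (mem_sdiff.mpr ⟨hrs, hrT⟩)).not_gt hqr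
  exact hmany.trans_le (card_le_card habove)

theorem le_of_mem_topRanked {s : Finset α} {f : α → β} {k : ℕ} {p : α}
    (hp : p ∈ s.topRanked f k) {t : Finset α} (hts : t ⊆ s) (hk : k < #t) {x₀ : β}
    (hx₀ : ∀ q ∈ t, x₀ ≤ f q) : x₀ ≤ f p := by
  by_contra! hpx
  have habove : t ⊆ {r ∈ s | f p < f r} := fun q hq =>
    mem_filter.mpr ⟨hts hq, hpx.trans_le (hx₀ q hq)⟩
  exact (hk.trans_le (card_le_card habove)).not_ge (mem_filter.mp hp).2

end Finset

theorem stmt6_general (P : Finset (ℝ × ℝ)) (n : ℕ) (hn : P.card = n) (hpos : 0 < n) :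
    ∃ p ∈ P, ∀ x₀ y₀ : ℝ,
      (n : ℝ) / 2 < ((P.filter (fun q => x₀ ≤ q.1 ∧ y₀ ≤ q.2)).card : ℝ) →
      x₀ ≤ p.1 ∧ y₀ ≤ p.2 := by
  have hhalf : n / 2 < #P := by omega
  obtain ⟨p, hp⟩ := inter_nonempty_of_card_lt_card_add_card
    (P.topRanked_subset Prod.fst (n / 2)) (P.topRanked_subset Prod.snd (n / 2))
    (by have := lt_card_topRanked Prod.fst hhalf; have := lt_card_topRanked Prod.snd hhalf; omega)
  obtain ⟨hpx, hpy⟩ := mem_inter.mp hp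
  refine ⟨p, topRanked_subset _ _ _ hpx, fun x₀ y₀ hbig => ?_⟩
  have hcard : n / 2 < #{q ∈ P | x₀ ≤ q.1 ∧ y₀ ≤ q.2} := by
    have : (n : ℝ) < 2 * #{q ∈ P | x₀ ≤ q.1 ∧ y₀ ≤ q.2} := by linarith
    have : n < 2 * #{q ∈ P | x₀ ≤ q.1 ∧ y₀ ≤ q.2} := by exact_mod_cast this
    omega
  exact ⟨le_of_mem_topRanked hpx (filter_subset _ _) hcard fun q hq => (mem_filter.mp hq).2.1,
    le_of_mem_topRanked hpy (filter_subset _ _) hcard fun q hq => (mem_filter.mp hq).2.2⟩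

theorem stmt6 (P : Finset (ℝ × ℝ)) (n : ℕ) (hn : P.card = n) (hpos : 0 < n)
    (hgen : ∀ u ∈ P, ∀ v ∈ P, u ≠ v → u.1 ≠ v.1 ∧ u.2 ≠ v.2) :
    ∃ p ∈ P, ∀ x₀ y₀ : ℝ,
      (n : ℝ) / 2 < ((P.filter (fun q => x₀ ≤ q.1 ∧ y₀ ≤ q.2)).card : ℝ) →
      x₀ ≤ p.1 ∧ y₀ ≤ p.2 :=
  stmt6_general P n hn hpos
end

section
/- Let P be a set of n points in the plane in general position. There exists a point p ∈ P such that every skyline rectangle (axis-parallel rectangle unbounded in the negative y-direction) containing more than 2n/3 points of P also contains p. -/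
/-!
Call a point of `P` central if at least `n/3` points of `P` lie weakly to its left and at least
`n/3` weakly to its right. Fewer than `n/3` points fail either condition, so more than `n/3`
points are central; take `p` to be the lowest of them. A skyline with more than `2n/3` points
meets every set of at least `n/3` points, in particular the points weakly left of `p`, those
weakly right of `p`, and the central points; the three common points show that the skyline
reaches `p` horizontally and vertically.
-/

open Finset

theorem exists_mem_and_of_card_lt_card_filter_add {α : Type*} {s : Finset α}
    {p q : α → Prop} [DecidablePred p] [DecidablePred q]
    (h : #s < #{a ∈ s | p a} + #{a ∈ s | q a}) : ∃ a ∈ s, p a ∧ q a := by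
  classical
  obtain ⟨a, ha⟩ := inter_nonempty_of_card_lt_card_add_card (filter_subset _ _)
    (filter_subset _ _) h
  rw [← filter_and, mem_filter] at ha
  exact ⟨a, ha⟩

section Rank

variable {α β : Type*} [LinearOrder β] (s : Finset α) (f : α → β)

theorem card_filter_card_filter_le_lt {c : ℝ} (hc : 0 < c) :
    (#{a ∈ s | (#{b ∈ s | f b ≤ f a} : ℝ) < c} : ℝ) < c := by
  set T := {a ∈ s | (#{b ∈ s | f b ≤ f a} : ℝ) < c}
  rcases T.eq_empty_or_nonempty with hT | hT
  · simpa [hT] using hc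
  obtain ⟨a, haT, ha_max⟩ := T.exists_max_image f hT
  have hsub : T ⊆ {b ∈ s | f b ≤ f a} := fun b hb =>
    mem_filter.mpr ⟨(mem_filter.mp hb).1, ha_max b hb⟩
  calc (#T : ℝ) ≤ #{b ∈ s | f b ≤ f a} := by exact_mod_cast card_le_card hsub
    _ < c := (mem_filter.mp haT).2

theorem card_lt_card_filter_central_add {c : ℝ} (hc : 0 < c) :
    (#s : ℝ) < #{a ∈ s | c ≤ #{b ∈ s | f b ≤ f a} ∧ c ≤ #{b ∈ s | f a ≤ f b}} + 2 * c := by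
  classical
  have hlow := card_filter_card_filter_le_lt s f hc
  have hhigh := card_filter_card_filter_le_lt s (OrderDual.toDual ∘ f) hc
  have hcover : s ⊆ {a ∈ s | (#{b ∈ s | f b ≤ f a} : ℝ) < c} ∪
      {a ∈ s | (#{b ∈ s | f a ≤ f b} : ℝ) < c} ∪
      {a ∈ s | c ≤ #{b ∈ s | f b ≤ f a} ∧ c ≤ #{b ∈ s | f a ≤ f b}} := by
    intro a ha
    have := lt_or_ge (#{b ∈ s | f b ≤ f a} : ℝ) c
    have := lt_or_ge (#{b ∈ s | f a ≤ f b} : ℝ) c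
    simp only [mem_union, mem_filter]
    tauto
  have hcard := (card_le_card hcover).trans
    ((card_union_le _ _).trans (Nat.add_le_add_right (card_union_le _ _) _))
  rw [← Nat.cast_le (α := ℝ)] at hcard
  push_cast at hcard
  simp only [Function.comp_apply, OrderDual.toDual_le_toDual] at hhigh
  linarith

end Rank

theorem stmt11_general (P : Finset (ℝ × ℝ)) (n : ℕ) (hn : P.card = n) (hpos : 0 < n) :
    ∃ p ∈ P, ∀ x₁ x₂ y : ℝ, x₁ ≤ x₂ →
      2 * (n : ℝ) / 3 <
        ((P.filter (fun q => x₁ ≤ q.1 ∧ q.1 ≤ x₂ ∧ q.2 ≤ y)).card : ℝ) →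
      x₁ ≤ p.1 ∧ p.1 ≤ x₂ ∧ p.2 ≤ y := by
  set M := {q ∈ P | (n : ℝ) / 3 ≤ #{r ∈ P | r.1 ≤ q.1} ∧ (n : ℝ) / 3 ≤ #{r ∈ P | q.1 ≤ r.1}}
  have hM : (n : ℝ) / 3 < #M := by
    have := card_lt_card_filter_central_add P Prod.fst (c := (n : ℝ) / 3) (by positivity)
    rw [hn] at this
    linarith
  obtain ⟨p, hpM, hp_lowest⟩ := M.exists_min_image Prod.snd
    (card_pos.mp (by exact_mod_cast (by positivity : (0 : ℝ) ≤ n / 3).trans_lt hM))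
  obtain ⟨hpP, hp_left, hp_right⟩ := mem_filter.mp hpM
  refine ⟨p, hpP, fun x₁ x₂ y _ hS => ?_⟩
  have hmeets : ∀ (Q : ℝ × ℝ → Prop) [DecidablePred Q], (n : ℝ) / 3 ≤ #{r ∈ P | Q r} →
      ∃ r ∈ P, (x₁ ≤ r.1 ∧ r.1 ≤ x₂ ∧ r.2 ≤ y) ∧ Q r := fun Q _ hQ =>
    exists_mem_and_of_card_lt_card_filter_add (by
      rw [hn, ← Nat.cast_lt (α := ℝ)]; push_cast; linarith)
  obtain ⟨r₁, -, ⟨hr₁, -, -⟩, hr₁p⟩ := hmeets _ hp_left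
  obtain ⟨r₂, -, ⟨-, hr₂, -⟩, hr₂p⟩ := hmeets _ hp_right
  have hPM : {r ∈ P | r ∈ M} = M := by
    rw [filter_mem_eq_inter, inter_eq_right.mpr (filter_subset _ P)]
  obtain ⟨r₃, -, ⟨-, -, hr₃⟩, hr₃M⟩ := hmeets (· ∈ M) (by rw [hPM]; exact hM.le)
  exact ⟨hr₁.trans hr₁p, hr₂p.trans hr₂, (hp_lowest r₃ hr₃M).trans hr₃⟩

theorem stmt11 (P : Finset (ℝ × ℝ)) (n : ℕ) (hn : P.card = n) (hpos : 0 < n)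
    (hgen : ∀ u ∈ P, ∀ v ∈ P, u ≠ v → u.1 ≠ v.1 ∧ u.2 ≠ v.2) :
    ∃ p ∈ P, ∀ x₁ x₂ y : ℝ, x₁ ≤ x₂ →
      2 * (n : ℝ) / 3 <
        ((P.filter (fun q => x₁ ≤ q.1 ∧ q.1 ≤ x₂ ∧ q.2 ≤ y)).card : ℝ) →
      x₁ ≤ p.1 ∧ p.1 ≤ x₂ ∧ p.2 ≤ y :=
  stmt11_general P n hn hpos
end

section
/- Let P be a finite centrally symmetric set of n points in R^d (p ∈ P implies −p ∈ P, and 0 ∉ P). Then the origin is contained in at least n²/4 of the diametral balls induced by pairs of points of P. -/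
/-!
For a fixed `a ∈ P`, negation maps the points `b` with `⟪a, b⟫ > 0` injectively to points with
`⟪a, b⟫ ≤ 0`, so at least `n / 2` points of `P` make a non-acute angle with `a`; none of them is `a`
itself since `a ≠ 0`. Summing over `a` gives at least `n² / 2` ordered pairs, hence at least `n² / 4`
unordered ones.
-/

open scoped Classical RealInnerProductSpace

open Finset

theorem Finset.card_filter_product_le_two_mul_card_filter_powersetCard_two {α : Type*}
    [DecidableEq α] (s : Finset α) (r : α → α → Prop) [DecidableRel r] (hr : ∀ a ∈ s, ¬ r a a) :
    #((s ×ˢ s).filter (fun p => r p.1 p.2)) ≤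
      2 * #((s.powersetCard 2).filter (fun S => ∃ a ∈ S, ∃ b ∈ S, a ≠ b ∧ r a b)) := by
  refine card_le_mul_card_image_of_maps_to (f := fun p => {p.1, p.2}) ?_ 2 ?_
  · rintro ⟨a, b⟩ hab
    simp only [mem_filter, mem_product] at hab
    obtain ⟨⟨ha, hb⟩, hrab⟩ := hab
    have hne : a ≠ b := by rintro rfl; exact hr a ha hrab
    simp only [mem_filter, mem_powersetCard]
    refine ⟨⟨insert_subset ha (singleton_subset_iff.mpr hb), card_pair hne⟩, a, ?_, b, ?_, hne, hrab⟩
      <;> simp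
  · intro S hS
    obtain ⟨x, y, -, rfl⟩ := card_eq_two.mp (mem_powersetCard.mp (mem_filter.mp hS).1).2
    calc #{q ∈ (s ×ˢ s).filter (fun p => r p.1 p.2) | ({q.1, q.2} : Finset α) = {x, y}}
        ≤ #({(x, y), (y, x)} : Finset (α × α)) := by
          refine card_le_card fun q hq => ?_
          have hpair := congrArg ((↑) : Finset α → Set α) (mem_filter.mp hq).2
          push_cast at hpair
          rcases Set.pair_eq_pair_iff.mp hpair with ⟨h1, h2⟩ | ⟨h1, h2⟩ <;> simp [Prod.ext_iff, h1, h2]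
      _ ≤ 2 := card_le_two

section InnerProductSpace

variable {E : Type*} [NormedAddCommGroup E] [InnerProductSpace ℝ E]

theorem card_le_two_mul_card_filter_inner_nonpos {P : Finset E} (hsym : ∀ p ∈ P, -p ∈ P) (a : E) :
    #P ≤ 2 * #(P.filter (fun b => ⟪a, b⟫ ≤ 0)) := by
  have hpos_le_nonpos : #(P.filter (fun b => ¬ ⟪a, b⟫ ≤ 0)) ≤ #(P.filter (fun b => ⟪a, b⟫ ≤ 0)) := by
    refine card_le_card_of_injOn (fun b => -b) (fun b hb => ?_) neg_injective.injOn
    simp only [mem_coe, mem_filter, not_le] at hb ⊢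
    exact ⟨hsym b hb.1, by rw [inner_neg_right]; linarith [hb.2]⟩
  have := card_filter_add_card_filter_not (s := P) (fun b => ⟪a, b⟫ ≤ 0)
  omega

theorem sq_card_le_two_mul_card_filter_inner_nonpos {P : Finset E} (hsym : ∀ p ∈ P, -p ∈ P) :
    #P ^ 2 ≤ 2 * #((P ×ˢ P).filter (fun p => ⟪p.1, p.2⟫ ≤ 0)) := by
  rw [card_filter, sum_product, mul_sum, sq, ← smul_eq_mul, ← sum_const]
  refine sum_le_sum fun a _ => ?_
  rw [← card_filter]
  exact card_le_two_mul_card_filter_inner_nonpos hsym a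

end InnerProductSpace

theorem stmt16 (d : ℕ) (P : Finset (EuclideanSpace ℝ (Fin d))) (n : ℕ)
    (hn : P.card = n) (hsym : ∀ p ∈ P, -p ∈ P) (h0 : (0 : EuclideanSpace ℝ (Fin d)) ∉ P) :
    (n : ℝ) ^ 2 / 4 ≤
      (((P.powersetCard 2).filter
          (fun S => ∃ a ∈ S, ∃ b ∈ S, a ≠ b ∧ ⟪a, b⟫ ≤ 0)).card : ℝ) := by
  have hirrefl : ∀ a ∈ P, ¬ ⟪a, a⟫ ≤ 0 := fun a ha => by
    rw [not_le, real_inner_self_pos]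
    exact ne_of_mem_of_not_mem ha h0
  have hcount := (sq_card_le_two_mul_card_filter_inner_nonpos hsym).trans
    (Nat.mul_le_mul_left 2 (card_filter_product_le_two_mul_card_filter_powersetCard_two P
      (fun a b => ⟪a, b⟫ ≤ 0) hirrefl))
  rw [hn] at hcount
  have hcount_real := (Nat.cast_le (α := ℝ)).mpr hcount
  push_cast at hcount_real
  linarith
end

section
/- Let x_1 < x_2 < ... < x_n be n points on the real line and let C be a multiset of m closed intervals, each of the form [x_i, x_j] with i < j. Then the sum over intervals c ∈ C of the number of points x_k contained in c is at least m²/(2n) + 3m/2. Consequently, some point x_k is contained in at least m²/(2n²) + 3m/(2n) intervals of C. -/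
/-!
Intervals with a common left endpoint `x_i` have distinct right endpoints, so the `j`-th shortest
of them contains at least `j + 1` points; a family of `m_i` such intervals therefore contains at
least `2 + 3 + ⋯ + (m_i + 1) = (m_i² + 3 m_i) / 2` points in total. Summing over `i` and using
Cauchy–Schwarz in the form `∑ m_i² ≥ m² / n` gives the first bound; double counting the
incidences and averaging over the `n` points gives the second.
-/

open scoped Classical

open Finset

section Intervals

theorem StrictMono.filter_le_and_le_eq_Icc {ι β : Type*} [Fintype ι] [LinearOrder ι]
    [LocallyFiniteOrder ι] [Preorder β] [DecidableLE β] {x : ι → β} (hx : StrictMono x)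
    (i j : ι) : univ.filter (fun k => x i ≤ x k ∧ x k ≤ x j) = Icc i j := by
  ext k
  simp [hx.le_iff_le]

lemma two_mul_sum_range_two_add (k : ℕ) : 2 * ∑ n ∈ range k, (2 + (n : ℤ)) = k ^ 2 + 3 * k := by
  induction k with
  | zero => simp
  | succ k ih => rw [sum_range_succ, mul_add, ih]; push_cast; ring

lemma card_sq_add_three_mul_card_le_two_mul_sum {α : Type*} (s : Finset α) (f : α → ℕ)
    (hf : Set.InjOn f s) (h2 : ∀ a ∈ s, 2 ≤ f a) :
    #s ^ 2 + 3 * #s ≤ 2 * ∑ a ∈ s, f a := by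
  have hfZ : Set.InjOn (fun a => (f a : ℤ)) s := fun a ha b hb hab => hf ha hb (by simpa using hab)
  have hsum := sum_range_le_sum (s := s.image fun a => (f a : ℤ)) (c := 2)
    (by simpa using fun a ha => (by exact_mod_cast h2 a ha : (2 : ℤ) ≤ f a))
  rw [card_image_of_injOn hfZ, sum_image hfZ] at hsum
  have := two_mul_sum_range_two_add #s
  zify
  linarith

lemma sq_card_filter_fst_add_three_mul_le_sum_card_Icc {n : ℕ} {C : Finset (Fin n × Fin n)}
    (hC : ∀ c ∈ C, c.1 < c.2) (i : Fin n) :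
    #{c ∈ C | c.1 = i} ^ 2 + 3 * #{c ∈ C | c.1 = i} ≤
      2 * ∑ c ∈ C with c.1 = i, #(Icc c.1 c.2) := by
  refine card_sq_add_three_mul_card_le_two_mul_sum _ _ (fun a ha b hb hab => ?_) fun c hc => ?_
  · simp only [mem_coe, mem_filter, Fin.card_Icc] at ha hb hab
    have := hC a ha.1
    have := hC b hb.1
    exact Prod.ext (ha.2.trans hb.2.symm) (Fin.ext (by omega))
  · have := hC c (mem_filter.1 hc).1
    rw [Fin.card_Icc]
    omega

end Intervals

section Counting

variable {ι κ : Type*} [Fintype κ]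

lemma sq_div_add_le_sum_of_fiberwise [DecidableEq κ] (C : Finset ι) (g : ι → κ) (w : ι → ℕ)
    (h : ∀ k, #{c ∈ C | g c = k} ^ 2 + 3 * #{c ∈ C | g c = k} ≤ 2 * ∑ c ∈ C with g c = k, w c) :
    (#C : ℝ) ^ 2 / (2 * Fintype.card κ) + 3 * #C / 2 ≤ ∑ c ∈ C, (w c : ℝ) := by
  set s : κ → ℝ := fun k => #{c ∈ C | g c = k}
  have hcard : ∑ k, s k = #C := by
    simp only [s]
    exact_mod_cast (card_eq_sum_card_fiberwise fun c _ => mem_univ (g c)).symm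
  have hCS : (#C : ℝ) ^ 2 / Fintype.card κ ≤ ∑ k, s k ^ 2 := by
    simpa [hcard] using sq_sum_div_le_sum_sq_div univ s (g := 1) (by simp)
  have hfib : ∑ k, (s k ^ 2 + 3 * s k) ≤ 2 * ∑ c ∈ C, (w c : ℝ) := by
    rw [← sum_fiberwise C g, mul_sum]
    exact sum_le_sum fun k _ => by simp only [s]; exact_mod_cast h k
  rw [sum_add_distrib, ← mul_sum, hcard] at hfib
  have : (#C : ℝ) ^ 2 / (2 * Fintype.card κ) = (#C : ℝ) ^ 2 / Fintype.card κ / 2 := by ring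
  linarith

lemma exists_sum_card_filter_div_le_card_filter [Nonempty κ] (C : Finset ι) (r : ι → κ → Prop)
    [∀ c k, Decidable (r c k)] :
    ∃ k, (∑ c ∈ C, (#{k | r c k} : ℝ)) / Fintype.card κ ≤ #{c ∈ C | r c k} := by
  have hdouble : ∑ c ∈ C, (#{k | r c k} : ℝ) = ∑ k, (#{c ∈ C | r c k} : ℝ) := by
    exact_mod_cast sum_card_bipartiteAbove_eq_sum_card_bipartiteBelow (s := C) (t := univ) r
  obtain ⟨k, -, hk⟩ := exists_le_of_sum_le univ_nonempty
    (f := fun _ => (∑ c ∈ C, (#{k | r c k} : ℝ)) / Fintype.card κ)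
    (g := fun k => (#{c ∈ C | r c k} : ℝ))
    (by rw [sum_const, card_univ, nsmul_eq_mul, mul_div_cancel₀ _ (by positivity), hdouble])
  exact ⟨k, hk⟩

end Counting

theorem stmt18 (n : ℕ) (hn : 0 < n) (x : Fin n → ℝ) (hx : StrictMono x)
    (C : Finset (Fin n × Fin n)) (hC : ∀ c ∈ C, c.1 < c.2) (m : ℕ) (hm : C.card = m) :
    (m : ℝ) ^ 2 / (2 * n) + 3 * m / 2 ≤
      ∑ c ∈ C, ((Finset.univ.filter (fun k => x c.1 ≤ x k ∧ x k ≤ x c.2)).card : ℝ) ∧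
    ∃ k : Fin n,
      (m : ℝ) ^ 2 / (2 * n ^ 2) + 3 * m / (2 * n) ≤
        ((C.filter (fun c => x c.1 ≤ x k ∧ x k ≤ x c.2)).card : ℝ) := by
  have hfirst := sq_div_add_le_sum_of_fiberwise C Prod.fst (fun c => #(Icc c.1 c.2))
    (sq_card_filter_fst_add_three_mul_le_sum_card_Icc hC)
  rw [Fintype.card_fin, hm] at hfirst
  simp_rw [← hx.filter_le_and_le_eq_Icc] at hfirst
  refine ⟨hfirst, ?_⟩
  have : Nonempty (Fin n) := ⟨⟨0, hn⟩⟩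
  obtain ⟨k, hk⟩ := exists_sum_card_filter_div_le_card_filter C
    fun c k => x c.1 ≤ x k ∧ x k ≤ x c.2
  rw [Fintype.card_fin] at hk
  refine ⟨k, le_trans ?_ hk⟩
  calc (m : ℝ) ^ 2 / (2 * n ^ 2) + 3 * m / (2 * n)
      = ((m : ℝ) ^ 2 / (2 * n) + 3 * m / 2) / n := by field_simp
    _ ≤ _ := div_le_div_of_nonneg_right hfirst n.cast_nonneg
end
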